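/- Let S_X, S_{X_T} be positive definite, H_{SD} ∈ ℂ^{d×s}, H_{TD} ∈ ℂ^{d×t}, H_{SR} ∈ ℂ^{r×s}, H_{TR} ∈ ℂ^{r×t} generic (full-rank concatenations). Define Ȳ_R = H_{SR}X + H_{TR}X_T and Ȳ_D = H_{SD}X + H_{TD}X_T for independent Gaussian X ~ N(0, S_X), X_T ~ N(0, S_{X_T}). Then rank(S_{Ȳ_R|Ȳ_D}) = min(r, (s + t − d)⁺) almost surely. -/

import Mathlib

/-!
Factor `S = B * Bᴴ` with `B` invertible and put `R = H_R * B`, `D = H_D * B`. The first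
Moore–Penrose identity forces `D * Dᴴ * P * D = D`, so `Dᴴ * P * D` fixes the row space of `D`
and `N = R - R * Dᴴ * P * D` satisfies `N * Dᴴ = 0`. The conditional covariance is then the Gram
matrix `N * Nᴴ`, of rank `rank N`. Since `N` differs from `R` by a row operation with `D`, and the
rows of `N` are orthogonal to those of `D`, `rank [R; D] = rank N + rank D`. Multiplying by the
invertible `B` changes no rank, so the answer is `rank [H_R; H_D] - rank H_D`, which genericity
evaluates to `min (r + d) (s + t) - min d (s + t) = min r (s + t - d)`.
-/

open Matrix ComplexOrder

/-- `P` is the Moore–Penrose pseudoinverse of `D`. -/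
def IsMoorePenroseInv {m n : ℕ} (D : Matrix (Fin m) (Fin n) ℂ)
    (P : Matrix (Fin n) (Fin m) ℂ) : Prop :=
  D * P * D = D ∧ P * D * P = P ∧ (D * P)ᴴ = D * P ∧ (P * D)ᴴ = P * D

theorem Submodule.finrank_prod {K M N : Type*} [DivisionRing K] [AddCommGroup M] [Module K M]
    [AddCommGroup N] [Module K N] (p : Submodule K M) (q : Submodule K N)
    [FiniteDimensional K p] [FiniteDimensional K q] :
    Module.finrank K (p.prod q) = Module.finrank K p + Module.finrank K q := by
  rw [← Module.finrank_prod, ← LinearMap.finrank_range_of_inj (f := p.subtype.prodMap q.subtype)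
    (Prod.map_injective.2 ⟨p.injective_subtype, q.injective_subtype⟩), LinearMap.range_prodMap,
    Submodule.range_subtype, Submodule.range_subtype]

namespace Matrix

section Field

variable {K : Type*} [Field K] {k m n m' n' : Type*} [Fintype k] [Fintype m] [Fintype n]
  [Fintype m'] [Fintype n']

theorem toLin_prod_fromBlocks_zero_zero [DecidableEq n] [DecidableEq n'] (A : Matrix m n K)
    (B : Matrix m' n' K) :
    toLin ((Pi.basisFun K n).prod (Pi.basisFun K n')) ((Pi.basisFun K m).prod (Pi.basisFun K m'))
      (fromBlocks A 0 0 B) = A.mulVecLin.prodMap B.mulVecLin := by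
  rw [← LinearMap.toMatrix_symm, LinearEquiv.symm_apply_eq]
  ext (i | i) (j | j) <;> simp [LinearMap.toMatrix_apply]

theorem rank_fromBlocks_zero_zero (A : Matrix m n K) (B : Matrix m' n' K) :
    (fromBlocks A 0 0 B).rank = A.rank + B.rank := by
  classical
  rw [rank_eq_finrank_range_toLin _ ((Pi.basisFun K m).prod (Pi.basisFun K m'))
    ((Pi.basisFun K n).prod (Pi.basisFun K n')), toLin_prod_fromBlocks_zero_zero,
    LinearMap.range_prodMap, Submodule.finrank_prod]
  rfl

theorem rank_fromRows_add_mul_left (N : Matrix k n K) (D : Matrix m n K) (X : Matrix k m K) :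
    (fromRows (N + X * D) D).rank = (fromRows N D).rank := by
  classical
  set U : Matrix (k ⊕ m) (k ⊕ m) K := fromBlocks 1 X 0 1
  have hU : IsUnit U.det :=
    (isUnit_iff_isUnit_det U).1 (isUnit_fromBlocks_zero₂₁.2 ⟨isUnit_one, isUnit_one⟩)
  have hrow : U * fromRows N D = fromRows (N + X * D) D := by
    simp [U, fromBlocks_mul_fromRows, add_comm]
  rw [← hrow, rank_mul_eq_right_of_isUnit_det _ _ hU]

end Field

section StarOrderedField

variable {𝕜 : Type*} [Field 𝕜] [PartialOrder 𝕜] [StarRing 𝕜] [StarOrderedRing 𝕜]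
  {k m n : Type*} [Fintype k] [Fintype m] [Fintype n]

theorem mul_conjTranspose_mul_mul_eq_self [DecidableEq m] {D : Matrix m n 𝕜} {P : Matrix m m 𝕜}
    (hP : D * Dᴴ * P * (D * Dᴴ) = D * Dᴴ) : D * Dᴴ * P * D = D := by
  have hkill : (D * Dᴴ * P - 1) * (D * Dᴴ) = 0 := by rw [sub_mul, one_mul, hP, sub_self]
  have hgram : ((D * Dᴴ * P - 1) * D) * ((D * Dᴴ * P - 1) * D)ᴴ = 0 := by
    rw [conjTranspose_mul, Matrix.mul_assoc, ← Matrix.mul_assoc D, ← Matrix.mul_assoc, hkill,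
      Matrix.zero_mul]
  have := self_mul_conjTranspose_eq_zero.mp hgram
  rwa [Matrix.sub_mul, Matrix.one_mul, sub_eq_zero] at this

theorem rank_fromRows_of_mul_conjTranspose_eq_zero {N : Matrix k n 𝕜} {D : Matrix m n 𝕜}
    (h : N * Dᴴ = 0) : (fromRows N D).rank = N.rank + D.rank := by
  have h' : D * Nᴴ = 0 := by simpa using congrArg conjTranspose h
  rw [← rank_self_mul_conjTranspose, conjTranspose_fromRows_eq_fromCols_conjTranspose,
    fromRows_mul_fromCols, h, h', rank_fromBlocks_zero_zero, rank_self_mul_conjTranspose,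
    rank_self_mul_conjTranspose]

theorem rank_fromRows_eq_rank_sub_add_rank [DecidableEq m] (A : Matrix k n 𝕜) (D : Matrix m n 𝕜)
    {P : Matrix m m 𝕜} (hP : D * Dᴴ * P * (D * Dᴴ) = D * Dᴴ) :
    (fromRows A D).rank = (A * Aᴴ - A * Dᴴ * P * (A * Dᴴ)ᴴ).rank + D.rank := by
  have hPD : Dᴴ * P * D * Dᴴ = Dᴴ := by
    have hPH : D * Dᴴ * Pᴴ * (D * Dᴴ) = D * Dᴴ := by
      simpa [Matrix.mul_assoc] using congrArg conjTranspose hP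
    simpa [Matrix.mul_assoc] using congrArg conjTranspose (mul_conjTranspose_mul_mul_eq_self hPH)
  set N := A - A * Dᴴ * P * D
  have hND : N * Dᴴ = 0 := by
    simp only [N, Matrix.sub_mul, Matrix.mul_assoc] at hPD ⊢
    rw [hPD, sub_self]
  have hschur : N * Nᴴ = A * Aᴴ - A * Dᴴ * P * (A * Dᴴ)ᴴ := by
    calc N * Nᴴ = N * Aᴴ - (N * Dᴴ) * (Pᴴ * D * Aᴴ) := by
          simp [N, Matrix.mul_sub, conjTranspose_mul, Matrix.mul_assoc]
      _ = A * Aᴴ - A * Dᴴ * P * (A * Dᴴ)ᴴ := by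
          rw [hND, Matrix.zero_mul, sub_zero]
          simp [N, Matrix.sub_mul, Matrix.mul_assoc, conjTranspose_mul]
  calc (fromRows A D).rank = (fromRows (N + A * Dᴴ * P * D) D).rank := by simp [N]
    _ = (fromRows N D).rank := rank_fromRows_add_mul_left _ _ _
    _ = _ := by
      rw [rank_fromRows_of_mul_conjTranspose_eq_zero hND, ← hschur, rank_self_mul_conjTranspose]

end StarOrderedField

section RCLike

open scoped MatrixOrder

variable {𝕜 m n : Type*} [RCLike 𝕜] [Fintype m] [Fintype n] [DecidableEq m] [DecidableEq n]

theorem PosDef.exists_isUnit_eq_mul_conjTranspose {S : Matrix n n 𝕜} (hS : S.PosDef) :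
    ∃ B : Matrix n n 𝕜, IsUnit B ∧ S = B * Bᴴ :=
  CStarAlgebra.isStrictlyPositive_iff_eq_mul_star_self.mp hS.isStrictlyPositive

theorem PosDef.fromBlocks_zero_zero {A : Matrix m m 𝕜} {D : Matrix n n 𝕜} (hA : A.PosDef)
    (hD : D.PosDef) : (fromBlocks A 0 0 D).PosDef := by
  obtain ⟨a, ha, rfl⟩ := hA.exists_isUnit_eq_mul_conjTranspose
  obtain ⟨d, hd, rfl⟩ := hD.exists_isUnit_eq_mul_conjTranspose
  have hb : IsUnit (fromBlocks a 0 0 d) := isUnit_fromBlocks_zero₂₁.2 ⟨ha, hd⟩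
  have := (posSemidef_self_mul_conjTranspose (fromBlocks a 0 0 d)).posDef_iff_isUnit.2
    (hb.mul hb.star)
  simpa [fromBlocks_conjTranspose, fromBlocks_multiply] using this

end RCLike

end Matrix

theorem rank_conditional_covariance_relay_given_dest_general
    (r d s t : ℕ)
    (SX : Matrix (Fin s) (Fin s) ℂ) (SXT : Matrix (Fin t) (Fin t) ℂ)
    (hSX : SX.PosDef) (hSXT : SXT.PosDef)
    (HR : Matrix (Fin r) (Fin s ⊕ Fin t) ℂ)
    (HD : Matrix (Fin d) (Fin s ⊕ Fin t) ℂ)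
    -- genericity: full rank of the stacked channel matrix and of `HD`
    (hgen1 : (Matrix.of (Sum.elim (fun i => HR i) (fun i => HD i)) :
        Matrix (Fin r ⊕ Fin d) (Fin s ⊕ Fin t) ℂ).rank = min (r + d) (s + t))
    (hgen2 : HD.rank = min d (s + t))
    (S : Matrix (Fin s ⊕ Fin t) (Fin s ⊕ Fin t) ℂ)
    (hS : S = Matrix.fromBlocks SX 0 0 SXT)
    (P : Matrix (Fin d) (Fin d) ℂ)
    (hP : IsMoorePenroseInv (HD * S * HDᴴ) P) :
    (HR * S * HRᴴ - (HR * S * HDᴴ) * P * (HR * S * HDᴴ)ᴴ).rank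
      = min r (s + t - d) := by
  obtain ⟨B, hB, rfl⟩ := (hS ▸ hSX.fromBlocks_zero_zero hSXT).exists_isUnit_eq_mul_conjTranspose
  have hBdet : IsUnit B.det := (isUnit_iff_isUnit_det B).1 hB
  have hrank := rank_fromRows_eq_rank_sub_add_rank (HR * B) (HD * B) (P := P)
    (by simpa [conjTranspose_mul, Matrix.mul_assoc] using hP.1)
  rw [← fromRows_mul, rank_mul_eq_left_of_isUnit_det _ _ hBdet,
    rank_mul_eq_left_of_isUnit_det _ _ hBdet] at hrank
  have hcov : HR * (B * Bᴴ) * HRᴴ - HR * (B * Bᴴ) * HDᴴ * P * (HR * (B * Bᴴ) * HDᴴ)ᴴ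
      = HR * B * (HR * B)ᴴ - HR * B * (HD * B)ᴴ * P * (HR * B * (HD * B)ᴴ)ᴴ := by
    simp [conjTranspose_mul, Matrix.mul_assoc]
  have hgen1' : (fromRows HR HD).rank = min (r + d) (s + t) := hgen1
  rw [hcov]
  omega

/-- For noiseless observations `Ȳ_R = H_SR X + H_TR X_T`,
`Ȳ_D = H_SD X + H_TD X_T` with independent Gaussian inputs of positive
definite covariances `S_X, S_{X_T}`, and generic (full-rank concatenation)
channel matrices, the conditional covariance
`S_{Ȳ_R|Ȳ_D} = S_{Ȳ_R} − S_{Ȳ_R Ȳ_D} S_{Ȳ_D}⁺ S_{Ȳ_D Ȳ_R}` has rank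
`min r ((s + t − d)⁺)` (truncated subtraction). -/
theorem rank_conditional_covariance_relay_given_dest
    (r d s t : ℕ)
    (HSR : Matrix (Fin r) (Fin s) ℂ) (HTR : Matrix (Fin r) (Fin t) ℂ)
    (HSD : Matrix (Fin d) (Fin s) ℂ) (HTD : Matrix (Fin d) (Fin t) ℂ)
    (SX : Matrix (Fin s) (Fin s) ℂ) (SXT : Matrix (Fin t) (Fin t) ℂ)
    (hSX : SX.PosDef) (hSXT : SXT.PosDef)
    (HR : Matrix (Fin r) (Fin s ⊕ Fin t) ℂ)
    (hHR : HR = Matrix.of fun i => Sum.elim (HSR i) (HTR i))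
    (HD : Matrix (Fin d) (Fin s ⊕ Fin t) ℂ)
    (hHD : HD = Matrix.of fun i => Sum.elim (HSD i) (HTD i))
    -- genericity: full rank of the stacked channel matrix and of `HD`
    (hgen1 : (Matrix.of (Sum.elim (fun i => HR i) (fun i => HD i)) :
        Matrix (Fin r ⊕ Fin d) (Fin s ⊕ Fin t) ℂ).rank = min (r + d) (s + t))
    (hgen2 : HD.rank = min d (s + t))
    (S : Matrix (Fin s ⊕ Fin t) (Fin s ⊕ Fin t) ℂ)
    (hS : S = Matrix.fromBlocks SX 0 0 SXT)
    (P : Matrix (Fin d) (Fin d) ℂ)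
    (hP : IsMoorePenroseInv (HD * S * HDᴴ) P) :
    (HR * S * HRᴴ - (HR * S * HDᴴ) * P * (HR * S * HDᴴ)ᴴ).rank
      = min r (s + t - d) :=
  rank_conditional_covariance_relay_given_dest_general r d s t SX SXT hSX hSXT HR HD hgen1 hgen2 S
    hS P hP
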